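/- arXiv:0806.4352 — 2 statements merged into one kernel-verified Lean document; each statement's English description precedes it below -/
import Mathlib

section
/- Let a, b, c, d be real numbers with b ≠ 0 and d ≠ 0, let a₀, a₁ : ℝ → ℝ, let U ⊆ ℝ be open, and let y : ℝ → ℝ be four times continuously differentiable on U with y⁽⁴⁾(x) + a₁(x)y′(x) + a₀(x)y(x) = 0 for all x ∈ U. Define φ(x̄) = (x̄ − c(1 + a·x̄))/(b(1 + a·x̄)), t(x̄) = 1 + a·x̄, and ȳ(x̄) = d·t(x̄)³·y(φ(x̄)). Then for every x̄ with t(x̄) ≠ 0 and φ(x̄) ∈ U, one has ȳ⁽⁴⁾(x̄) + ā₁(x̄)ȳ′(x̄) + ā₀(x̄)ȳ(x̄) = 0, where ā₁(x̄) = a₁(φ(x̄))/(b³ t(x̄)⁶) and ā₀(x̄) = a₀(φ(x̄))/(b⁴ t(x̄)⁸) − 3a·a₁(φ(x̄))/(b³ t(x̄)⁷). -/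
/-- The point transformation of the independent variable:
`φ(x̄) = (x̄ − c(1 + a x̄)) / (b(1 + a x̄))`. -/
noncomputable def phi (a b c : ℝ) (x : ℝ) : ℝ :=
  (x - c * (1 + a * x)) / (b * (1 + a * x))

/-- The transformed dependent variable for the fourth-order canonical form:
`ȳ(x̄) = d (1+a x̄)³ y(φ(x̄))`. -/
noncomputable def ybar (a b c d : ℝ) (y : ℝ → ℝ) (x : ℝ) : ℝ :=
  d * (1 + a * x) ^ 3 * y (phi a b c x)

/-!
With `t = 1 + a x̄`, the map `φ` is Möbius with `φ' = 1 / (b t²)` and `t' = a`, so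
`(t ^ m · f ∘ φ)' = m a t ^ (m - 1) · f ∘ φ + t ^ (m - 2) / b · f' ∘ φ`.
Differentiating `ȳ = d t³ · y ∘ φ` four times by this rule, the weight `3 = n - 1` makes every
lower-order term cancel, leaving `ȳ⁽⁴⁾ = d / (b⁴ t⁵) · y⁽⁴⁾ ∘ φ`. Eliminating `y⁽⁴⁾(φ)` by the
equation and `y(φ), y'(φ)` by `ȳ, ȳ'` gives the transformed equation.
-/

open Set

theorem ContDiffOn.hasDerivAt_iteratedDeriv {𝕜 F : Type*} [NontriviallyNormedField 𝕜]
    [NormedAddCommGroup F] [NormedSpace 𝕜 F] {f : 𝕜 → F} {s : Set 𝕜} {n : WithTop ℕ∞} {m : ℕ}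
    {x : 𝕜} (hf : ContDiffOn 𝕜 n f s) (hs : IsOpen s) (hmn : m < n) (hx : x ∈ s) :
    HasDerivAt (iteratedDeriv m f) (iteratedDeriv (m + 1) f x) x := by
  have hdiff : DifferentiableOn 𝕜 (iteratedDeriv m f) s :=
    (hf.differentiableOn_iteratedDerivWithin hmn hs.uniqueDiffOn).congr
      (iteratedDerivWithin_of_isOpen hs).symm
  rw [iteratedDeriv_succ]
  exact (hdiff.differentiableAt (hs.mem_nhds hx)).hasDerivAt

theorem Set.EqOn.iteratedDeriv_succ_of_hasDerivAt {𝕜 F : Type*} [NontriviallyNormedField 𝕜]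
    [NormedAddCommGroup F] [NormedSpace 𝕜 F] {f g g' : 𝕜 → F} {s : Set 𝕜} {n : ℕ}
    (h : EqOn (iteratedDeriv n f) g s) (hs : IsOpen s) (hg : ∀ x ∈ s, HasDerivAt g (g' x) x) :
    EqOn (iteratedDeriv (n + 1) f) g' s := fun x hx => by
  rw [iteratedDeriv_succ, (h.eventuallyEq_of_mem (hs.mem_nhds hx)).deriv_eq]
  exact (hg x hx).deriv

theorem hasDerivAt_one_add_mul (a x : ℝ) : HasDerivAt (fun x => 1 + a * x) a x := by
  simpa using ((hasDerivAt_id x).const_mul a).const_add 1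

variable {a b c : ℝ}

theorem hasDerivAt_phi (hb : b ≠ 0) {x : ℝ} (ht : 1 + a * x ≠ 0) :
    HasDerivAt (phi a b c) (1 / (b * (1 + a * x) ^ 2)) x := by
  have hT := hasDerivAt_one_add_mul a x
  refine (((hasDerivAt_id' x).sub (hT.const_mul c)).div (hT.const_mul b)
    (mul_ne_zero hb ht)).congr_deriv ?_
  simp only [Pi.sub_apply]
  field_simp
  ring

theorem hasDerivAt_zpow_mul_comp_phi (hb : b ≠ 0) (m : ℤ) {f : ℝ → ℝ} {f' x : ℝ}
    (ht : 1 + a * x ≠ 0) (hf : HasDerivAt f f' (phi a b c x)) :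
    HasDerivAt (fun x => (1 + a * x) ^ m * f (phi a b c x))
      (m * a * (1 + a * x) ^ (m - 1) * f (phi a b c x) + (1 + a * x) ^ (m - 2) / b * f') x := by
  refine (((hasDerivAt_zpow m _ (Or.inl ht)).comp x (hasDerivAt_one_add_mul a x)).mul
    (hf.comp x (hasDerivAt_phi hb ht))).congr_deriv ?_
  simp only [Function.comp_apply, zpow_sub₀ ht, zpow_two, zpow_one]
  field_simp

theorem hasDerivAt_ybar (hb : b ≠ 0) (d : ℝ) {y : ℝ → ℝ} {x : ℝ} (ht : 1 + a * x ≠ 0)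
    (hy : DifferentiableAt ℝ y (phi a b c x)) :
    HasDerivAt (ybar a b c d y) (3 * a * d * (1 + a * x) ^ 2 * y (phi a b c x)
      + d / b * (1 + a * x) * deriv y (phi a b c x)) x := by
  refine ((((hasDerivAt_one_add_mul a x).pow 3).const_mul d).mul
    (hy.hasDerivAt.comp x (hasDerivAt_phi hb ht))).congr_deriv ?_
  simp only [Function.comp_apply, Pi.pow_apply]
  field_simp
  ring

theorem isOpen_setOf_phi_mem (hb : b ≠ 0) {U : Set ℝ} (hU : IsOpen U) :
    IsOpen {x | 1 + a * x ≠ 0 ∧ phi a b c x ∈ U} := by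
  have hphi : ContinuousOn (phi a b c) {x | 1 + a * x ≠ 0} :=
    ContinuousOn.div (by fun_prop) (by fun_prop) fun x hx => mul_ne_zero hb hx
  exact hphi.isOpen_inter_preimage (isOpen_ne_fun (by fun_prop) (by fun_prop)) hU

theorem iteratedDeriv_four_ybar (hb : b ≠ 0) (d : ℝ) {y : ℝ → ℝ} {U : Set ℝ} (hU : IsOpen U)
    (hy : ContDiffOn ℝ 4 y U) {x : ℝ} (ht : 1 + a * x ≠ 0) (hx : phi a b c x ∈ U) :
    iteratedDeriv 4 (ybar a b c d y) x
      = d / (b ^ 4 * (1 + a * x) ^ 5) * iteratedDeriv 4 y (phi a b c x) := by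
  set V := {x | 1 + a * x ≠ 0 ∧ phi a b c x ∈ U}
  have hV : IsOpen V := isOpen_setOf_phi_mem hb hU
  -- Terms with `m = 0` are kept so that each derivative below is a plain sum of `step`s.
  have step : ∀ k < 4, ∀ (m : ℤ) (C : ℝ), ∀ x ∈ V,
      HasDerivAt (fun x => C * ((1 + a * x) ^ m * iteratedDeriv k y (phi a b c x)))
        (C * (m * a * (1 + a * x) ^ (m - 1) * iteratedDeriv k y (phi a b c x)
          + (1 + a * x) ^ (m - 2) / b * iteratedDeriv (k + 1) y (phi a b c x))) x :=
    fun k hk m C x hx => (hasDerivAt_zpow_mul_comp_phi hb m hx.1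
      (hy.hasDerivAt_iteratedDeriv hU (by exact_mod_cast hk) hx.2)).const_mul C
  have h0 : EqOn (iteratedDeriv 0 (ybar a b c d y))
      (fun x => d * ((1 + a * x) ^ (3 : ℤ) * iteratedDeriv 0 y (phi a b c x))) V :=
    fun x _ => by simp only [iteratedDeriv_zero, ybar, zpow_ofNat]; ring
  have h1 := h0.iteratedDeriv_succ_of_hasDerivAt hV
    (g' := fun x => 3 * a * d * ((1 + a * x) ^ (2 : ℤ) * iteratedDeriv 0 y (phi a b c x))
      + d / b * ((1 + a * x) ^ (1 : ℤ) * iteratedDeriv 1 y (phi a b c x)))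
    fun x hx => (step 0 (by norm_num) 3 d x hx).congr_deriv (by norm_num; ring)
  have h2 := h1.iteratedDeriv_succ_of_hasDerivAt hV
    (g' := fun x => 6 * a ^ 2 * d * ((1 + a * x) ^ (1 : ℤ) * iteratedDeriv 0 y (phi a b c x))
      + 4 * a * d / b * ((1 + a * x) ^ (0 : ℤ) * iteratedDeriv 1 y (phi a b c x))
      + d / b ^ 2 * ((1 + a * x) ^ (-1 : ℤ) * iteratedDeriv 2 y (phi a b c x)))
    fun x hx => ((step 0 (by norm_num) 2 _ x hx).add (step 1 (by norm_num) 1 _ x hx)).congr_deriv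
      (by norm_num; ring)
  have h3 := h2.iteratedDeriv_succ_of_hasDerivAt hV
    (g' := fun x => 6 * a ^ 3 * d * ((1 + a * x) ^ (0 : ℤ) * iteratedDeriv 0 y (phi a b c x))
      + 6 * a ^ 2 * d / b * ((1 + a * x) ^ (-1 : ℤ) * iteratedDeriv 1 y (phi a b c x))
      + 3 * a * d / b ^ 2 * ((1 + a * x) ^ (-2 : ℤ) * iteratedDeriv 2 y (phi a b c x))
      + d / b ^ 3 * ((1 + a * x) ^ (-3 : ℤ) * iteratedDeriv 3 y (phi a b c x)))
    fun x hx => (((step 0 (by norm_num) 1 _ x hx).add (step 1 (by norm_num) 0 _ x hx)).add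
      (step 2 (by norm_num) (-1) _ x hx)).congr_deriv (by norm_num; ring)
  have h4 := h3.iteratedDeriv_succ_of_hasDerivAt hV
    (g' := fun x => d / b ^ 4 * ((1 + a * x) ^ (-5 : ℤ) * iteratedDeriv 4 y (phi a b c x)))
    fun x hx => ((((step 0 (by norm_num) 0 _ x hx).add (step 1 (by norm_num) (-1) _ x hx)).add
      (step 2 (by norm_num) (-2) _ x hx)).add (step 3 (by norm_num) (-3) _ x hx)).congr_deriv
      (by norm_num; ring)
  rw [h4 ⟨ht, hx⟩]
  simp only [zpow_neg, zpow_ofNat]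
  field_simp

theorem stmt_4_general (a b c d : ℝ) (hb : b ≠ 0)
    (a0 a1 : ℝ → ℝ) (U : Set ℝ) (hU : IsOpen U) (y : ℝ → ℝ)
    (hy : ContDiffOn ℝ 4 y U)
    (hode : ∀ x ∈ U,
      iteratedDeriv 4 y x + a1 x * deriv y x + a0 x * y x = 0)
    (xb : ℝ) (ht : 1 + a * xb ≠ 0) (hφ : phi a b c xb ∈ U) :
    iteratedDeriv 4 (ybar a b c d y) xb
      + (a1 (phi a b c xb) / (b ^ 3 * (1 + a * xb) ^ 6))
          * deriv (ybar a b c d y) xb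
      + (a0 (phi a b c xb) / (b ^ 4 * (1 + a * xb) ^ 8)
          - 3 * a * a1 (phi a b c xb) / (b ^ 3 * (1 + a * xb) ^ 7))
          * ybar a b c d y xb = 0 := by
  have hy' : DifferentiableAt ℝ y (phi a b c xb) :=
    (hy.contDiffAt (hU.mem_nhds hφ)).differentiableAt (by norm_num)
  have hy4 : iteratedDeriv 4 y (phi a b c xb)
      = -(a1 (phi a b c xb) * deriv y (phi a b c xb) + a0 (phi a b c xb) * y (phi a b c xb)) := by
    linarith [hode _ hφ]
  rw [iteratedDeriv_four_ybar hb d hU hy ht hφ, (hasDerivAt_ybar hb d ht hy').deriv, hy4, ybar]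
  field_simp
  ring

/-- the structure invariance transformation for
`y⁽⁴⁾ + a₁ y′ + a₀ y = 0`: the transformed function
`ȳ(x̄) = d (1+a x̄)³ y(φ(x̄))` satisfies `ȳ⁽⁴⁾ + ā₁ ȳ′ + ā₀ ȳ = 0` with
`ā₁ = (a₁∘φ)/(b³ t⁶)` and `ā₀ = (a₀∘φ)/(b⁴ t⁸) − 3a (a₁∘φ)/(b³ t⁷)`,
where `t(x̄) = 1 + a x̄`. -/
theorem stmt_4 (a b c d : ℝ) (hb : b ≠ 0) (hd : d ≠ 0)
    (a0 a1 : ℝ → ℝ) (U : Set ℝ) (hU : IsOpen U) (y : ℝ → ℝ)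
    (hy : ContDiffOn ℝ 4 y U)
    (hode : ∀ x ∈ U,
      iteratedDeriv 4 y x + a1 x * deriv y x + a0 x * y x = 0)
    (xb : ℝ) (ht : 1 + a * xb ≠ 0) (hφ : phi a b c xb ∈ U) :
    iteratedDeriv 4 (ybar a b c d y) xb
      + (a1 (phi a b c xb) / (b ^ 3 * (1 + a * xb) ^ 6))
          * deriv (ybar a b c d y) xb
      + (a0 (phi a b c xb) / (b ^ 4 * (1 + a * xb) ^ 8)
          - 3 * a * a1 (phi a b c xb) / (b ^ 3 * (1 + a * xb) ^ 7))
          * ybar a b c d y xb = 0 :=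
  stmt_4_general a b c d hb a0 a1 U hU y hy hode xb ht hφ
end

section
/- Let F : ℝ → ℝ be four times continuously differentiable with F′(x̄) ≠ 0 for all x̄, and let a₀, a₁ : ℝ → ℝ. Let S_F := F′′′/F′ − (3/2)(F″/F′)² denote the Schwarzian derivative of F. Define ā₁ := F′²·(a₁∘F) + 2S_F and ā₀ := F′³·(a₀∘F) + F′F″·(a₁∘F) + S_F′. If y : ℝ → ℝ is three times continuously differentiable and satisfies y′′′ + a₁y′ + a₀y = 0 on ℝ, then ȳ := (y∘F)/F′ satisfies ȳ′′′ + ā₁ȳ′ + ā₀ȳ = 0 on ℝ. -/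
/-- The Schwarzian derivative `S_F = F′′′/F′ − (3/2)(F″/F′)²`. -/
noncomputable def schwarzian (F : ℝ → ℝ) (x : ℝ) : ℝ :=
  iteratedDeriv 3 F x / deriv F x - (3 / 2) * (iteratedDeriv 2 F x / deriv F x) ^ 2

/-!
Differentiating `ȳ = (y ∘ F) / F′` three times, the terms `2 S_F ȳ′ + S_F′ ȳ` cancel exactly the
contributions of `y′ ∘ F` and `y ∘ F` in `ȳ′′′` (and the `y″ ∘ F` terms cancel on their own), so
that `ȳ′′′ + 2 S_F ȳ′ + S_F′ ȳ = F′² (y′′′ ∘ F)` for every `y`. The remaining parts of `ā₁, ā₀`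
just transport `a₁ y′ + a₀ y`: `F′² ȳ′ + F′ F″ ȳ = F′² (y′ ∘ F)` and `F′³ ȳ = F′² (y ∘ F)`.
Hence `ȳ′′′ + ā₁ ȳ′ + ā₀ ȳ = F′² ((y′′′ + a₁ y′ + a₀ y) ∘ F)`, which vanishes.
-/

theorem ContDiff.hasDerivAt_iteratedDeriv {𝕜 E : Type*} [NontriviallyNormedField 𝕜]
    [NormedAddCommGroup E] [NormedSpace 𝕜 E] {f : 𝕜 → E} {n : WithTop ℕ∞} {k : ℕ}
    (hf : ContDiff 𝕜 n f) (hk : k < n) (x : 𝕜) :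
    HasDerivAt (iteratedDeriv k f) (iteratedDeriv (k + 1) f x) x := by
  rw [iteratedDeriv_succ]
  exact (hf.differentiable_iteratedDeriv k hk x).hasDerivAt

theorem ContDiff.hasDerivAt_iteratedDeriv_comp {𝕜 : Type*} [NontriviallyNormedField 𝕜]
    {f F : 𝕜 → 𝕜} {F' x : 𝕜} {n : WithTop ℕ∞} {k : ℕ} (hf : ContDiff 𝕜 n f) (hk : k < n)
    (hF : HasDerivAt F F' x) :
    HasDerivAt (fun s => iteratedDeriv k f (F s)) (iteratedDeriv (k + 1) f (F x) * F') x :=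
  (hf.hasDerivAt_iteratedDeriv hk (F x)).comp x hF

section Pullback

variable {F y : ℝ → ℝ} {x : ℝ}

theorem hasDerivAt_schwarzian (hF : ContDiff ℝ 4 F) (hx : deriv F x ≠ 0) :
    HasDerivAt (schwarzian F)
      ((iteratedDeriv 4 F x * deriv F x ^ 2
        - 4 * iteratedDeriv 2 F x * iteratedDeriv 3 F x * deriv F x
        + 3 * iteratedDeriv 2 F x ^ 3) / deriv F x ^ 3) x := by
  have h1 : HasDerivAt (deriv F) (iteratedDeriv 2 F x) x := by
    simpa using hF.hasDerivAt_iteratedDeriv (k := 1) (by norm_num) x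
  have h2 := hF.hasDerivAt_iteratedDeriv (k := 2) (by norm_num) x
  have h3 := hF.hasDerivAt_iteratedDeriv (k := 3) (by norm_num) x
  refine ((h3.div h1 hx).sub (((h2.div h1 hx).pow 2).const_mul (3 / 2 : ℝ))).congr_deriv ?_
  simp only [Pi.div_apply, Nat.cast_ofNat, Nat.reduceAdd, Nat.reduceSub, pow_one]
  field_simp
  ring

theorem hasDerivAt_comp_div_deriv (hF : ContDiff ℝ 2 F) (hy : ContDiff ℝ 1 y)
    (hx : deriv F x ≠ 0) :
    HasDerivAt (fun s => y (F s) / deriv F s)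
      (deriv y (F x) - y (F x) * iteratedDeriv 2 F x / deriv F x ^ 2) x := by
  have hF0 : HasDerivAt F (deriv F x) x := (hF.differentiable (by norm_num) x).hasDerivAt
  have hF1 : HasDerivAt (deriv F) (iteratedDeriv 2 F x) x := by
    simpa using hF.hasDerivAt_iteratedDeriv (k := 1) (by norm_num) x
  have hY0 : HasDerivAt (fun s => y (F s)) (deriv y (F x) * deriv F x) x := by
    simpa using hy.hasDerivAt_iteratedDeriv_comp (k := 0) (by norm_num) hF0
  refine (hY0.div hF1 hx).congr_deriv ?_
  field_simp

theorem hasDerivAt_deriv_comp_div_deriv (hF : ContDiff ℝ 3 F) (hy : ContDiff ℝ 2 y)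
    (hx : deriv F x ≠ 0) :
    HasDerivAt (fun s => deriv y (F s) - y (F s) * iteratedDeriv 2 F s / deriv F s ^ 2)
      (iteratedDeriv 2 y (F x) * deriv F x - deriv y (F x) * iteratedDeriv 2 F x / deriv F x
        - y (F x) * iteratedDeriv 3 F x / deriv F x ^ 2
        + 2 * y (F x) * iteratedDeriv 2 F x ^ 2 / deriv F x ^ 3) x := by
  have hF0 : HasDerivAt F (deriv F x) x := (hF.differentiable (by norm_num) x).hasDerivAt
  have hF1 : HasDerivAt (deriv F) (iteratedDeriv 2 F x) x := by
    simpa using hF.hasDerivAt_iteratedDeriv (k := 1) (by norm_num) x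
  have hF2 := hF.hasDerivAt_iteratedDeriv (k := 2) (by norm_num) x
  have hY0 : HasDerivAt (fun s => y (F s)) (deriv y (F x) * deriv F x) x := by
    simpa using hy.hasDerivAt_iteratedDeriv_comp (k := 0) (by norm_num) hF0
  have hY1 : HasDerivAt (fun s => deriv y (F s)) (iteratedDeriv 2 y (F x) * deriv F x) x := by
    simpa using hy.hasDerivAt_iteratedDeriv_comp (k := 1) (by norm_num) hF0
  refine (hY1.sub ((hY0.mul hF2).div (hF1.pow 2) (pow_ne_zero 2 hx))).congr_deriv ?_
  simp only [Pi.mul_apply, Pi.pow_apply, Nat.cast_ofNat, Nat.reduceAdd, Nat.reduceSub, pow_one]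
  field_simp
  ring

theorem hasDerivAt_deriv_deriv_comp_div_deriv (hF : ContDiff ℝ 4 F) (hy : ContDiff ℝ 3 y)
    (hx : deriv F x ≠ 0) :
    HasDerivAt (fun s => iteratedDeriv 2 y (F s) * deriv F s
        - deriv y (F s) * iteratedDeriv 2 F s / deriv F s
        - y (F s) * iteratedDeriv 3 F s / deriv F s ^ 2
        + 2 * y (F s) * iteratedDeriv 2 F s ^ 2 / deriv F s ^ 3)
      (iteratedDeriv 3 y (F x) * deriv F x ^ 2
        - 2 * deriv y (F x) * iteratedDeriv 3 F x / deriv F x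
        + 3 * deriv y (F x) * iteratedDeriv 2 F x ^ 2 / deriv F x ^ 2
        - y (F x) * iteratedDeriv 4 F x / deriv F x ^ 2
        + 6 * y (F x) * iteratedDeriv 2 F x * iteratedDeriv 3 F x / deriv F x ^ 3
        - 6 * y (F x) * iteratedDeriv 2 F x ^ 3 / deriv F x ^ 4) x := by
  have hF0 : HasDerivAt F (deriv F x) x := (hF.differentiable (by norm_num) x).hasDerivAt
  have hF1 : HasDerivAt (deriv F) (iteratedDeriv 2 F x) x := by
    simpa using hF.hasDerivAt_iteratedDeriv (k := 1) (by norm_num) x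
  have hF2 := hF.hasDerivAt_iteratedDeriv (k := 2) (by norm_num) x
  have hF3 := hF.hasDerivAt_iteratedDeriv (k := 3) (by norm_num) x
  have hY0 : HasDerivAt (fun s => y (F s)) (deriv y (F x) * deriv F x) x := by
    simpa using hy.hasDerivAt_iteratedDeriv_comp (k := 0) (by norm_num) hF0
  have hY1 : HasDerivAt (fun s => deriv y (F s)) (iteratedDeriv 2 y (F x) * deriv F x) x := by
    simpa using hy.hasDerivAt_iteratedDeriv_comp (k := 1) (by norm_num) hF0
  have hY2 := hy.hasDerivAt_iteratedDeriv_comp (k := 2) (by norm_num) hF0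
  refine ((((hY2.mul hF1).sub ((hY1.mul hF2).div hF1 hx)).sub
    ((hY0.mul hF3).div (hF1.pow 2) (pow_ne_zero 2 hx))).add
    (((hY0.const_mul 2).mul (hF2.pow 2)).div (hF1.pow 3) (pow_ne_zero 3 hx))).congr_deriv ?_
  simp only [Pi.mul_apply, Pi.pow_apply, Nat.cast_ofNat, Nat.reduceAdd, Nat.reduceSub, pow_one]
  field_simp
  ring

theorem iteratedDeriv_three_comp_div_deriv_add_schwarzian (hF : ContDiff ℝ 4 F)
    (hF' : ∀ x, deriv F x ≠ 0) (hy : ContDiff ℝ 3 y) (x : ℝ) :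
    iteratedDeriv 3 (fun s => y (F s) / deriv F s) x
      + 2 * schwarzian F x * deriv (fun s => y (F s) / deriv F s) x
      + deriv (schwarzian F) x * (y (F x) / deriv F x)
      = deriv F x ^ 2 * iteratedDeriv 3 y (F x) := by
  have h1 : deriv (fun s => y (F s) / deriv F s) = _ := funext fun s =>
    (hasDerivAt_comp_div_deriv (hF.of_le (by norm_num)) (hy.of_le (by norm_num)) (hF' s)).deriv
  have h2 := funext fun s =>
    (hasDerivAt_deriv_comp_div_deriv (hF.of_le (by norm_num)) (hy.of_le (by norm_num))
      (hF' s)).deriv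
  rw [iteratedDeriv_succ, iteratedDeriv_succ, iteratedDeriv_one, h1, h2,
    (hasDerivAt_deriv_deriv_comp_div_deriv hF hy (hF' x)).deriv,
    (hasDerivAt_schwarzian hF (hF' x)).deriv, schwarzian]
  have hx := hF' x
  field_simp
  ring

end Pullback

/-- the structure invariance transformation of the normal form
`y′′′ + a₁ y′ + a₀ y = 0`: if `y` solves it, then `ȳ = (y∘F)/F′` satisfies
`ȳ′′′ + ā₁ ȳ′ + ā₀ ȳ = 0`, where `ā₁ = F′² (a₁∘F) + 2S_F` and
`ā₀ = F′³ (a₀∘F) + F′F″ (a₁∘F) + S_F′`. -/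
theorem stmt_7 (F : ℝ → ℝ) (hF : ContDiff ℝ 4 F) (hF' : ∀ x, deriv F x ≠ 0)
    (a0 a1 : ℝ → ℝ)
    (y : ℝ → ℝ) (hy : ContDiff ℝ 3 y)
    (hode : ∀ x, iteratedDeriv 3 y x + a1 x * deriv y x + a0 x * y x = 0) :
    ∀ x, iteratedDeriv 3 (fun s => y (F s) / deriv F s) x
      + ((deriv F x) ^ 2 * a1 (F x) + 2 * schwarzian F x)
          * deriv (fun s => y (F s) / deriv F s) x
      + ((deriv F x) ^ 3 * a0 (F x) + deriv F x * iteratedDeriv 2 F x * a1 (F x)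
          + deriv (schwarzian F) x)
          * (y (F x) / deriv F x) = 0 := by
  intro x
  have hx := hF' x
  have hD1 : deriv F x ^ 2 * deriv (fun s => y (F s) / deriv F s) x
      + deriv F x * iteratedDeriv 2 F x * (y (F x) / deriv F x)
      = deriv F x ^ 2 * deriv y (F x) := by
    rw [(hasDerivAt_comp_div_deriv (hF.of_le (by norm_num)) (hy.of_le (by norm_num)) hx).deriv]
    field_simp
    ring
  have hD0 : deriv F x ^ 3 * (y (F x) / deriv F x) = deriv F x ^ 2 * y (F x) := by
    field_simp
  linear_combination iteratedDeriv_three_comp_div_deriv_add_schwarzian hF hF' hy x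
    + a1 (F x) * hD1 + a0 (F x) * hD0 + deriv F x ^ 2 * hode (F x)
end
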